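/- arXiv:2110.12933 — 2 statements merged into one kernel-verified Lean document; each statement's English description precedes it below -/
import Mathlib

section
/- Let K be a field, X = {x₁,…,xₙ}, and let I = (f₁,…,f_r) be a two-sided ideal of K⟨X⟩ and A ∈ ℤ^{n×k} a matrix with rows a₁,…,aₙ. Let I^{φ̄_A} be the two-sided ideal of the quotient algebra 𝒜 = K⟨X,T,T⁻¹⟩/J generated by φ̄_A(f₁),…,φ̄_A(f_r). Then hom_A(I) = { f ∈ K⟨X⟩ : π(ι(f)) ∈ I^{φ̄_A} }, i.e., the homogeneous part of I with respect to deg_A consists exactly of those polynomials in K⟨X⟩ whose residue class modulo J lies in the extension ideal I^{φ̄_A}. -/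
open scoped BigOperators

/-- The two-sided ideal generated by a set `S`, i.e. the set of finite sums
`∑ pᵢ * fᵢ * qᵢ` with `fᵢ ∈ S` and `pᵢ, qᵢ` arbitrary ring elements. -/
def idealSpan {A : Type*} [Semiring A] (S : Set A) : Set A :=
  {x | ∃ (d : ℕ) (p f q : Fin d → A), (∀ i, f i ∈ S) ∧ x = ∑ i, p i * f i * q i}

/-- The alphabet `X ∪ T ∪ T⁻¹`: `n` letters `xᵢ`, `k` letters `t_j` and `k` letters `t_j⁻¹`. -/
abbrev XTT (n k : ℕ) := Fin n ⊕ (Fin k ⊕ Fin k)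

/-- The relations generating the ideal `J ⊆ K⟨X,T,T⁻¹⟩`: every letter of `T ∪ T⁻¹` commutes
with every letter of `X ∪ T ∪ T⁻¹`, and `t_j · t_j⁻¹ = 1`.  The quotient algebra
`𝒜 = K⟨X,T,T⁻¹⟩/J` is `RingQuot (Jrel K n k)` and the quotient map `π` is
`RingQuot.mkAlgHom K (Jrel K n k)`. -/
inductive Jrel (K : Type*) [Field K] (n k : ℕ) :
    FreeAlgebra K (XTT n k) → FreeAlgebra K (XTT n k) → Prop
  | comm (u : XTT n k) (v : Fin k ⊕ Fin k) :
      Jrel K n k (FreeAlgebra.ι K u * FreeAlgebra.ι K (Sum.inr v))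
        (FreeAlgebra.ι K (Sum.inr v) * FreeAlgebra.ι K u)
  | inv (j : Fin k) :
      Jrel K n k
        (FreeAlgebra.ι K (Sum.inr (Sum.inl j)) * FreeAlgebra.ι K (Sum.inr (Sum.inr j))) 1

/-- `τ(α) = s₁^{|α₁|} ⋯ s_k^{|α_k|}` where `s_j = t_j` if `α_j ≥ 0` and `s_j = t_j⁻¹`
otherwise. -/
noncomputable def tau (K : Type*) [Field K] (n k : ℕ) (α : Fin k → ℤ) :
    FreeAlgebra K (XTT n k) :=
  (List.ofFn fun j : Fin k =>
    (if 0 ≤ α j then FreeAlgebra.ι K (Sum.inr (Sum.inl j) : XTT n k)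
      else FreeAlgebra.ι K (Sum.inr (Sum.inr j) : XTT n k)) ^ (α j).natAbs).prod

/-- The monoid homomorphism `deg_A : ⟨X⟩ → ℤ^k` determined by the rows `a i` of the matrix
`A ∈ ℤ^{n×k}`: the degree of a word is the sum of the degrees of its letters. -/
def degA {n k : ℕ} (a : Fin n → Fin k → ℤ) (m : FreeMonoid (Fin n)) : Fin k → ℤ :=
  ((FreeMonoid.toList m).map a).sum

/-- `f ∈ K⟨X⟩` is homogeneous w.r.t. `deg_A` if all monomials in its support (computed via the
identification of `K⟨X⟩` with the monoid algebra of the free monoid `⟨X⟩`) have the same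
`deg_A`-value. -/
def Homog (K : Type*) [Field K] {n k : ℕ} (a : Fin n → Fin k → ℤ)
    (f : FreeAlgebra K (Fin n)) : Prop :=
  ∃ α : Fin k → ℤ,
    ∀ m ∈ (FreeAlgebra.equivMonoidAlgebraFreeMonoid (R := K) f).coeff.support, degA a m = α

/-- The canonical embedding `ι : K⟨X⟩ → K⟨X,T,T⁻¹⟩`, `xᵢ ↦ xᵢ`. -/
noncomputable def embA (K : Type*) [Field K] (n k : ℕ) :
    FreeAlgebra K (Fin n) →ₐ[K] FreeAlgebra K (XTT n k) :=
  FreeAlgebra.lift K fun i => FreeAlgebra.ι K (Sum.inl i)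

/-- The algebra homomorphism `φ_A : K⟨X⟩ → K⟨X,T,T⁻¹⟩`, `xᵢ ↦ xᵢ · τ(aᵢ)`. -/
noncomputable def phiA (K : Type*) [Field K] (n k : ℕ) (a : Fin n → Fin k → ℤ) :
    FreeAlgebra K (Fin n) →ₐ[K] FreeAlgebra K (XTT n k) :=
  FreeAlgebra.lift K fun i => FreeAlgebra.ι K (Sum.inl i) * tau K n k (a i)

/-! In `𝒜` the letters `t_j` become central units, so `𝒜` is the group algebra of `ℤ^k` over
`K⟨X⟩`; write `D(g) = ∑_β t^β g_β` for the decomposition of `g` into its `deg_A`-homogeneous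
components `g_β`.

If `s ∈ I` is homogeneous of degree `α`, then `φ̄_A(s) = π(ι(s)) t^α` with `t^α` a unit, so
`π(ι(s)) ∈ I^{φ̄_A}`. Conversely, the algebra map `𝒜 → K⟨X⟩[ℤ^k]` given by `xᵢ ↦ t^{aᵢ} xᵢ` and
`t_j ↦ t_j⁻¹` sends `π(ι(g))` to `D(g)` and `φ̄_A(f)` to `f`. Hence `π(ι(g)) ∈ I^{φ̄_A}` puts
`D(g)` into the ideal of `K⟨X⟩[ℤ^k]` generated by `I`, all of whose coefficients lie in `I`: every
`g_β` is a homogeneous element of `I`, and `g = ∑_β g_β ∈ hom_A(I)`. -/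

theorem idealSpan_eq_span {A : Type*} [Ring A] (S : Set A) : idealSpan S = (TwoSidedIdeal.span S : Set A) := by
  refine subset_antisymm ?_ fun x hx => ?_
  · rintro _ ⟨d, p, f, q, hf, rfl⟩
    exact TwoSidedIdeal.finsetSum_mem _ _ _ fun i _ => TwoSidedIdeal.mul_mem_right _ _ _
      (TwoSidedIdeal.mul_mem_left _ _ _ (TwoSidedIdeal.subset_span (hf i)))
  let I : TwoSidedIdeal A := .mk' (idealSpan S)
    ⟨0, Fin.elim0, Fin.elim0, Fin.elim0, fun i => i.elim0, by simp⟩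
    (by
      rintro _ _ ⟨d₁, p₁, f₁, q₁, hf₁, rfl⟩ ⟨d₂, p₂, f₂, q₂, hf₂, rfl⟩
      refine ⟨d₁ + d₂, Fin.append p₁ p₂, Fin.append f₁ f₂, Fin.append q₁ q₂,
        Fin.addCases (by simpa using hf₁) (by simpa using hf₂), by simp [Fin.sum_univ_add]⟩)
    (by
      rintro _ ⟨d, p, f, q, hf, rfl⟩
      exact ⟨d, -p, f, q, hf, by simp [Finset.sum_neg_distrib]⟩)
    (by
      rintro c _ ⟨d, p, f, q, hf, rfl⟩
      exact ⟨d, fun i => c * p i, f, q, hf, by simp [Finset.mul_sum, mul_assoc]⟩)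
    (by
      rintro _ c ⟨d, p, f, q, hf, rfl⟩
      exact ⟨d, p, f, fun i => q i * c, hf, by simp [Finset.sum_mul, mul_assoc]⟩)
  exact (TwoSidedIdeal.mem_mk' ..).1 <| TwoSidedIdeal.span_le (I := I) |>.2
    (fun s hs => ⟨1, fun _ => 1, fun _ => s, fun _ => 1, fun _ => hs, by simp⟩) hx

theorem TwoSidedIdeal.apply_mem_span_image {R S F : Type*} [Ring R] [Ring S] [FunLike F R S]
    [RingHomClass F R S] (φ : F) {s : Set R} {x : R} (hx : x ∈ span s) :
    φ x ∈ span (φ '' s) :=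
  (mem_comap φ).1 <| span_le (I := comap φ (span (φ '' s))) |>.2
    (fun y hy => (mem_comap φ).2 (subset_span ⟨y, hy, rfl⟩)) hx

open TwoSidedIdeal in
theorem AddMonoidAlgebra.coeff_mem_span_of_mem_span_single_zero {R G : Type*} [Ring R]
    [AddGroup G] {s : Set R} {w : AddMonoidAlgebra R G}
    (hw : w ∈ span (single 0 '' s)) (g : G) : w.coeff g ∈ span s := by
  classical
  let I : TwoSidedIdeal (AddMonoidAlgebra R G) := .mk' {w | ∀ g, w.coeff g ∈ span s}
    (fun _ => by simp)
    (fun hx hy g => by simpa using add_mem _ (hx g) (hy g))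
    (fun hx g => by simpa using neg_mem _ (hx g))
    (fun hy g => by
      rw [coeff_mul_apply_left]
      exact finsuppSum_mem _ _ fun _ _ => mul_mem_left _ _ _ (hy _))
    (fun hx g => by
      rw [coeff_mul_apply_right]
      exact finsuppSum_mem _ _ fun _ _ => mul_mem_right _ _ _ (hx _))
  refine (mem_mk' ..).1 (span_le (I := I) |>.2 ?_ hw) g
  rintro _ ⟨z, hz, rfl⟩
  refine (mem_mk' ..).2 fun g => ?_
  rw [coeff_single, Finsupp.single_apply]
  split_ifs
  exacts [subset_span hz, TwoSidedIdeal.zero_mem _]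

open FreeAlgebra AddMonoidAlgebra

noncomputable section Grading

variable {K : Type*} [Field K] {n k : ℕ} (a : Fin n → Fin k → ℤ)

variable (K) in
def degDecompose :
    FreeAlgebra K (Fin n) →ₐ[K] AddMonoidAlgebra (FreeAlgebra K (Fin n)) (Fin k → ℤ) :=
  lift K fun i => single (a i) (ι K i)

theorem degDecompose_freeMonoidLift (m : FreeMonoid (Fin n)) :
    degDecompose K a (FreeMonoid.lift (ι K) m) = single (degA a m) (FreeMonoid.lift (ι K) m) := by
  induction m using FreeMonoid.inductionOn' with
  | one => simp [degA, one_def]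
  | of_mul i m ih =>
    rw [map_mul, map_mul, ih, FreeMonoid.lift_eval_of, degDecompose, lift_ι_apply,
      single_mul_single]
    rfl

theorem degDecompose_coeff (g : FreeAlgebra K (Fin n)) (β : Fin k → ℤ) :
    (degDecompose K a g).coeff β = equivMonoidAlgebraFreeMonoid.symm
      (MonoidAlgebra.ofCoeff ((equivMonoidAlgebraFreeMonoid g).coeff.filter (degA a · = β))) := by
  obtain ⟨x, rfl⟩ := equivMonoidAlgebraFreeMonoid.symm.surjective g
  rw [AlgEquiv.apply_symm_apply]
  induction x using MonoidAlgebra.induction_linear with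
  | zero => simp [Finsupp.filter_zero]
  | add x y hx hy => simp [hx, hy, Finsupp.filter_add]
  | single m c =>
    by_cases h : degA a m = β <;>
      simp [equivMonoidAlgebraFreeMonoid, degDecompose_freeMonoidLift, h,
        Finsupp.filter_single_of_pos, Finsupp.filter_single_of_neg]

theorem homog_coeff_degDecompose (g : FreeAlgebra K (Fin n)) (β : Fin k → ℤ) :
    Homog K a ((degDecompose K a g).coeff β) :=
  ⟨β, fun m hm => by
    simp only [degDecompose_coeff, AlgEquiv.apply_symm_apply, MonoidAlgebra.coeff_ofCoeff,
      Finsupp.support_filter, Finset.mem_filter] at hm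
    exact hm.2⟩

theorem degDecompose_of_forall_degA_eq {s : FreeAlgebra K (Fin n)} {α : Fin k → ℤ}
    (hs : ∀ m ∈ (equivMonoidAlgebraFreeMonoid s).coeff.support, degA a m = α) :
    degDecompose K a s = single α s := by
  ext β
  rw [degDecompose_coeff, coeff_single, Finsupp.single_apply]
  split_ifs with h
  · rw [(Finsupp.filter_eq_self_iff _ _).2 fun m hm => h ▸ hs m (Finsupp.mem_support_iff.2 hm),
      MonoidAlgebra.ofCoeff_coeff, AlgEquiv.symm_apply_apply]
  · rw [(Finsupp.filter_eq_zero_iff _ _).2 fun m hdeg =>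
      Finsupp.notMem_support_iff.1 fun hm => h ((hs m hm).symm.trans hdeg),
      MonoidAlgebra.ofCoeff_zero, map_zero]

theorem sum_coeff_degDecompose (g : FreeAlgebra K (Fin n)) :
    ∑ β ∈ (degDecompose K a g).coeff.support, (degDecompose K a g).coeff β = g := by
  let ε := liftNCAlgHom (AlgHom.id K (FreeAlgebra K (Fin n))) (1 : Multiplicative (Fin k → ℤ) →* _)
    fun _ _ => Commute.one_right _
  have hε : ε.comp (degDecompose K a) = AlgHom.id K _ := by
    ext i
    simp [ε, degDecompose]
  simpa [ε, liftNCAlgHom, liftNCRingHom, liftNC, Finsupp.sum] using congr($hε g)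

end Grading

noncomputable section Quotient

variable {K : Type*} [Field K] {n k : ℕ}

local notation "𝒜" => RingQuot (Jrel K n k)

local notation "π" => RingQuot.mkAlgHom K (Jrel K n k)

theorem map_tau {R : Type*} [Semiring R] [Algebra K R] (F : FreeAlgebra K (XTT n k) →ₐ[K] R)
    (χ : Multiplicative (Fin k → ℤ) →* R)
    (hpos : ∀ j, F (ι K (.inr (.inl j))) = χ (.ofAdd (Pi.single j 1)))
    (hneg : ∀ j, F (ι K (.inr (.inr j))) = χ (.ofAdd (-Pi.single j 1))) (α : Fin k → ℤ) :
    F (tau K n k α) = χ (.ofAdd α) := by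
  have hfactor : ∀ j, F ((if 0 ≤ α j then ι K (.inr (.inl j)) else ι K (.inr (.inr j))) ^
      (α j).natAbs) = χ (.ofAdd (Pi.single j (α j))) := by
    intro j
    split_ifs with h
    · rw [map_pow, hpos, ← map_pow, ← ofAdd_nsmul, ← Pi.single_smul', nsmul_one,
        Int.natCast_natAbs, abs_of_nonneg h]
    · rw [map_pow, hneg, ← map_pow, ← ofAdd_nsmul, ← Pi.single_neg, ← Pi.single_smul',
        nsmul_eq_mul, mul_neg_one, Int.natCast_natAbs, abs_of_neg (not_le.1 h), neg_neg]
  rw [tau, map_list_prod, List.map_ofFn, show ⇑F ∘ _ = ⇑χ ∘ fun j => .ofAdd (Pi.single j (α j))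
    from funext hfactor, ← List.map_ofFn, ← map_list_prod, List.prod_ofFn, ← ofAdd_sum,
    Finset.univ_sum_single]

theorem mk_ι_inr_mem_center (v : Fin k ⊕ Fin k) : π (ι K (.inr v)) ∈ Subring.center 𝒜 := by
  refine Subring.mem_center_iff.2 fun z => ?_
  obtain ⟨y, rfl⟩ := RingQuot.mkAlgHom_surjective K (Jrel K n k) z
  induction y using FreeAlgebra.induction with
  | grade0 c => rw [AlgHom.commutes]; exact Algebra.commutes c _
  | grade1 u => simpa using RingQuot.mkAlgHom_rel K (Jrel.comm u v)
  | mul x y hx hy => rw [map_mul, mul_assoc, hy, ← mul_assoc, hx, mul_assoc]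
  | add x y hx hy => rw [map_add, add_mul, mul_add, hx, hy]

theorem mk_t_mul_mk_tInv (j : Fin k) : π (ι K (.inr (.inl j))) * π (ι K (.inr (.inr j))) = 1 := by
  simpa using RingQuot.mkAlgHom_rel K (Jrel.inv (K := K) (n := n) j)

variable (K n) in
def tUnit (j : Fin k) : (Subring.center 𝒜)ˣ where
  val := ⟨_, mk_ι_inr_mem_center (.inl j)⟩
  inv := ⟨_, mk_ι_inr_mem_center (.inr j)⟩
  val_inv := Subtype.ext (mk_t_mul_mk_tInv j)
  inv_val := Subtype.ext <|
    (Subring.mem_center_iff.1 (mk_ι_inr_mem_center (.inl j)) _).trans (mk_t_mul_mk_tInv j)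

variable (K n k) in
def tUnitPow : Multiplicative (Fin k → ℤ) →* (Subring.center 𝒜)ˣ :=
  MonoidHom.mk' (fun α => ∏ j, tUnit K n j ^ α.toAdd j) fun α β => by
    simp [zpow_add, Finset.prod_mul_distrib]

theorem tUnitPow_ofAdd_single (j : Fin k) :
    tUnitPow K n k (.ofAdd (Pi.single j 1)) = tUnit K n j := by
  simp [tUnitPow, Pi.single_apply]

variable (K n k) in
def tPow : Multiplicative (Fin k → ℤ) →* 𝒜 :=
  ((Subring.center 𝒜).subtype.toMonoidHom.comp (Units.coeHom _)).comp (tUnitPow K n k)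

theorem tPow_mem_center (α : Multiplicative (Fin k → ℤ)) : tPow K n k α ∈ Subring.center 𝒜 :=
  Subtype.prop _

theorem mk_tau (α : Fin k → ℤ) : π (tau K n k α) = tPow K n k (.ofAdd α) := by
  refine map_tau _ _ (fun j => ?_) (fun j => ?_) α
  · rw [tPow, MonoidHom.comp_apply, tUnitPow_ofAdd_single]
    rfl
  · rw [tPow, MonoidHom.comp_apply, ofAdd_neg, map_inv, tUnitPow_ofAdd_single]
    rfl

variable (K n k) in
def toQuot : AddMonoidAlgebra (FreeAlgebra K (Fin n)) (Fin k → ℤ) →ₐ[K] 𝒜 :=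
  liftNCAlgHom ((π).comp (embA K n k)) (tPow K n k) fun _ α =>
    Subring.mem_center_iff.1 (tPow_mem_center α) _

theorem toQuot_single (α : Fin k → ℤ) (h : FreeAlgebra K (Fin n)) :
    toQuot K n k (single α h) = π (embA K n k h) * tPow K n k (.ofAdd α) := by
  simp [toQuot, liftNCAlgHom, liftNCRingHom]

theorem toQuot_degDecompose (a : Fin n → Fin k → ℤ) (g : FreeAlgebra K (Fin n)) :
    toQuot K n k (degDecompose K a g) = π (phiA K n k a g) := by
  have : (toQuot K n k).comp (degDecompose K a) = (π).comp (phiA K n k a) := by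
    refine FreeAlgebra.hom_ext (funext fun i => ?_)
    simp [degDecompose, phiA, toQuot_single, embA, mk_tau]
  exact congr($this g)

variable (K) in
def twist (a : Fin n → Fin k → ℤ) :
    FreeAlgebra K (XTT n k) →ₐ[K] AddMonoidAlgebra (FreeAlgebra K (Fin n)) (Fin k → ℤ) :=
  lift K <| Sum.elim (fun i => single (a i) (ι K i))
    (Sum.elim (fun j => single (-Pi.single j 1) 1) (fun j => single (Pi.single j 1) 1))

theorem twist_tau (a : Fin n → Fin k → ℤ) (α : Fin k → ℤ) :
    twist K a (tau K n k α) = single (-α) 1 :=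
  map_tau (twist K a) ((of (FreeAlgebra K (Fin n)) (Fin k → ℤ)).comp invMonoidHom)
    (fun _ => by simp [twist]) (fun _ => by simp [twist]) α

theorem twist_ι_inr_commute (a : Fin n → Fin k → ℤ) (v : Fin k ⊕ Fin k)
    (x : AddMonoidAlgebra (FreeAlgebra K (Fin n)) (Fin k → ℤ)) :
    Commute (twist K a (ι K (.inr v))) x := by
  rcases v with j | j <;> simp only [twist, lift_ι_apply, Sum.elim_inr, Sum.elim_inl] <;>
    exact single_commute (fun _ => AddCommute.all _ _) (fun _ => Commute.one_left _) x

theorem twist_rel (a : Fin n → Fin k → ℤ) ⦃x y : FreeAlgebra K (XTT n k)⦄ (h : Jrel K n k x y) :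
    twist K a x = twist K a y := by
  cases h with
  | comm u v => simp only [map_mul, (twist_ι_inr_commute a v _).eq]
  | inv j => simp [twist, single_mul_single, one_def]

variable (K) in
def twistQuot (a : Fin n → Fin k → ℤ) :
    𝒜 →ₐ[K] AddMonoidAlgebra (FreeAlgebra K (Fin n)) (Fin k → ℤ) :=
  RingQuot.liftAlgHom K ⟨twist K a, twist_rel a⟩

theorem twistQuot_mk (a : Fin n → Fin k → ℤ) (x : FreeAlgebra K (XTT n k)) :
    twistQuot K a (π x) = twist K a x :=
  RingQuot.liftAlgHom_mkAlgHom_apply _ _ _ _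

theorem twistQuot_mk_embA (a : Fin n → Fin k → ℤ) (g : FreeAlgebra K (Fin n)) :
    twistQuot K a (π (embA K n k g)) = degDecompose K a g := by
  have : (twist K a).comp (embA K n k) = degDecompose K a := by
    ext i
    simp [twist, embA, degDecompose]
  rw [twistQuot_mk, ← this, AlgHom.comp_apply]

theorem twistQuot_mk_phiA (a : Fin n → Fin k → ℤ) (g : FreeAlgebra K (Fin n)) :
    twistQuot K a (π (phiA K n k a g)) = single 0 g := by
  have : (twist K a).comp (phiA K n k a) = singleZeroAlgHom := by
    refine FreeAlgebra.hom_ext (funext fun i => ?_)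
    simp only [Function.comp_apply, AlgHom.comp_apply, phiA, lift_ι_apply, map_mul, twist_tau]
    simp [twist, single_mul_single]
  rw [twistQuot_mk, ← AlgHom.comp_apply, this]
  rfl

theorem mk_embA_mem_span_of_homog {a : Fin n → Fin k → ℤ} {S : Set (FreeAlgebra K (Fin n))}
    {s : FreeAlgebra K (Fin n)} (hs : s ∈ TwoSidedIdeal.span S) (hhom : Homog K a s) :
    π (embA K n k s) ∈ TwoSidedIdeal.span (((π).comp (phiA K n k a)) '' S) := by
  obtain ⟨α, hα⟩ := hhom
  have hsplit : π (embA K n k s) = π (phiA K n k a s) * tPow K n k (.ofAdd (-α)) := by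
    rw [← toQuot_degDecompose, degDecompose_of_forall_degA_eq a hα, toQuot_single, mul_assoc,
      ← map_mul, ← ofAdd_add, add_neg_cancel, ofAdd_zero, map_one, mul_one]
  rw [hsplit]
  exact TwoSidedIdeal.mul_mem_right _ _ _ (TwoSidedIdeal.apply_mem_span_image _ hs)

theorem mem_span_homog_of_mk_embA_mem {a : Fin n → Fin k → ℤ} {S : Set (FreeAlgebra K (Fin n))}
    {g : FreeAlgebra K (Fin n)}
    (hg : π (embA K n k g) ∈ TwoSidedIdeal.span (((π).comp (phiA K n k a)) '' S)) :
    g ∈ TwoSidedIdeal.span {h | h ∈ TwoSidedIdeal.span S ∧ Homog K a h} := by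
  have hdec : degDecompose K a g ∈ TwoSidedIdeal.span (single 0 '' S) := by
    have := TwoSidedIdeal.apply_mem_span_image (twistQuot K a) hg
    have hcomp : twistQuot K a ∘ (π).comp (phiA K n k a) = single 0 :=
      funext (twistQuot_mk_phiA a)
    rwa [twistQuot_mk_embA, ← Set.image_comp, hcomp] at this
  rw [← sum_coeff_degDecompose a g]
  exact TwoSidedIdeal.finsetSum_mem _ _ _ fun β _ => TwoSidedIdeal.subset_span
    ⟨coeff_mem_span_of_mem_span_single_zero hdec β, homog_coeff_degDecompose a g β⟩

theorem span_homog_eq_comap_span_image (a : Fin n → Fin k → ℤ) (S : Set (FreeAlgebra K (Fin n))) :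
    TwoSidedIdeal.span {h | h ∈ TwoSidedIdeal.span S ∧ Homog K a h} =
      (TwoSidedIdeal.span (((π).comp (phiA K n k a)) '' S)).comap ((π).comp (embA K n k)) :=
  le_antisymm
    (TwoSidedIdeal.span_le.2 fun _ ⟨hs, hhom⟩ =>
      (TwoSidedIdeal.mem_comap _).2 (mk_embA_mem_span_of_homog hs hhom))
    fun _ hg =>
      mem_span_homog_of_mk_embA_mem ((TwoSidedIdeal.mem_comap ((π).comp (embA K n k))).1 hg)

end Quotient

/-- **The homogeneous part of an ideal via the extension along `φ̄_A`.**
Let `I = (f₁,…,f_r) ⊆ K⟨X⟩`, let `A ∈ ℤ^{n×k}` have rows `a i`, and let `I^{φ̄_A}` be the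
two-sided ideal of `𝒜 = K⟨X,T,T⁻¹⟩/J` generated by the `φ̄_A(fᵢ)`.  Then `hom_A(I)`, the
two-sided ideal generated by all `deg_A`-homogeneous elements of `I`, equals
`{ f ∈ K⟨X⟩ : π(ι(f)) ∈ I^{φ̄_A} }`. -/
theorem homogeneousPart_eq_contraction (K : Type*) [Field K] (n k r : ℕ)
    (a : Fin n → Fin k → ℤ) (f : Fin r → FreeAlgebra K (Fin n)) :
    idealSpan {g | g ∈ idealSpan (Set.range f) ∧ Homog K a g} =
      {g | RingQuot.mkAlgHom K (Jrel K n k) (embA K n k g) ∈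
        idealSpan (Set.range fun i =>
          RingQuot.mkAlgHom K (Jrel K n k) (phiA K n k a (f i)))} := by
  have hrange : (Set.range fun i => RingQuot.mkAlgHom K (Jrel K n k) (phiA K n k a (f i))) =
      ((RingQuot.mkAlgHom K (Jrel K n k)).comp (phiA K n k a)) '' Set.range f :=
    Set.range_comp ((RingQuot.mkAlgHom K (Jrel K n k)).comp (phiA K n k a)) f
  simp only [idealSpan_eq_span, SetLike.mem_coe, hrange, span_homog_eq_comap_span_image]
  ext g
  exact TwoSidedIdeal.mem_comap _
end

section
/- Let K be a field, X = {x₁,…,xₙ}, and ⪯ a monomial ordering on ⟨X⟩. Let I be a two-sided ideal of K⟨X⟩ and G its reduced Gröbner basis, i.e., G ⊆ I generates I, for every nonzero f ∈ I there exist g ∈ G and a,b ∈ ⟨X⟩ with lm(f) = a·lm(g)·b, every g ∈ G is monic, and no monomial in supp(g) is of the form a·lm(g')·b for any g' ∈ G \ {g} and a,b ∈ ⟨X⟩. Define ρ(I) := { m·g : m ∈ ⟨X⟩, g ∈ G, and every proper prefix p of m·lm(g) is irreducible modulo lm(G), i.e., p is not of the form a·lm(g')·b with g' ∈ G, a,b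 ∈ ⟨X⟩ }. Then ρ(I) is a right Gröbner basis of I viewed as a right ideal: ρ(I) right-generates I, and for every nonzero f ∈ I there exist h ∈ ρ(I) and b ∈ ⟨X⟩ with lm(f) = lm(h)·b. Moreover, for every f ∈ ρ(I), lm(f) is not a right multiple lm(f')·b of lm(f') for any f' ∈ ρ(I) \ {f}. -/
open scoped BigOperators

/-- The right ideal generated by a set `S`, i.e. the set of finite sums `∑ fᵢ * qᵢ`
with `fᵢ ∈ S` and `qᵢ` arbitrary ring elements. -/
def rightIdealSpan {A : Type*} [Semiring A] (S : Set A) : Set A :=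
  {x | ∃ (d : ℕ) (f q : Fin d → A), (∀ i, f i ∈ S) ∧ x = ∑ i, f i * q i}

/-- The leading monomial of `f ∈ K⟨X⟩` with respect to a linear order `ord` on the free
monoid of monomials: the `ord`-largest element of the support of `f` (and `1` if `f = 0`).
Here `K⟨X⟩` is realized as the monoid algebra of the free monoid `⟨X⟩`, so that monomials
form its canonical basis. -/
noncomputable def lm {K : Type*} [Field K] {n : ℕ} (ord : LinearOrder (FreeMonoid (Fin n)))
    (f : MonoidAlgebra K (FreeMonoid (Fin n))) : FreeMonoid (Fin n) :=
  if h : f.coeff.support.Nonempty then @Finset.max' _ ord f.coeff.support h else 1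

/-!
Let `f ∈ I` be nonzero. Some `lm g`, `g ∈ G`, is a factor of `lm f`; taking the occurrence
`a · lm g · b` that ends first, `a · g ∈ ρ(I)` and `lm (a · g) = a · lm g` is a prefix of `lm f`.
Since the elements of `ρ(I)` are monic, right division by them strictly lowers leading monomials,
so well-foundedness of `⪯` shows that `ρ(I)` right-generates `I`. Finally, if
`lm (m · g) = lm (m' · g') · b`, then `b = 1`, as otherwise `m' · lm g'` would be a reducible
proper prefix of `m · lm g`; then one of `lm g`, `lm g'` is a suffix of the other, which the
reducedness of `G` only allows for `g = g'` and `m = m'`.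
-/

open MonoidAlgebra

section Spans

variable {A : Type*} [Ring A] {S R : Set A}

lemma sub_mem_idealSpan {x y : A} (hx : x ∈ idealSpan S) (hy : y ∈ idealSpan S) :
    x - y ∈ idealSpan S := by
  obtain ⟨d₁, p₁, f₁, q₁, hf₁, rfl⟩ := hx
  obtain ⟨d₂, p₂, f₂, q₂, hf₂, rfl⟩ := hy
  refine ⟨d₁ + d₂, Fin.addCases p₁ (-p₂ ·), Fin.addCases f₁ f₂, Fin.addCases q₁ q₂,
    Fin.addCases (by simpa using hf₁) (by simpa using hf₂), ?_⟩
  simp [Fin.sum_univ_add, sub_eq_add_neg, ← Finset.sum_neg_distrib]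

lemma mul_mem_idealSpan {x : A} (hx : x ∈ idealSpan S) (r : A) : x * r ∈ idealSpan S := by
  obtain ⟨d, p, f, q, hf, rfl⟩ := hx
  exact ⟨d, p, f, (q · * r), hf, by simp [Finset.sum_mul, mul_assoc]⟩

lemma zero_mem_rightIdealSpan : (0 : A) ∈ rightIdealSpan S :=
  ⟨0, Fin.elim0, Fin.elim0, fun i => i.elim0, by simp⟩

lemma add_mem_rightIdealSpan {x y : A} (hx : x ∈ rightIdealSpan S)
    (hy : y ∈ rightIdealSpan S) : x + y ∈ rightIdealSpan S := by
  obtain ⟨d₁, f₁, q₁, hf₁, rfl⟩ := hx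
  obtain ⟨d₂, f₂, q₂, hf₂, rfl⟩ := hy
  exact ⟨d₁ + d₂, Fin.addCases f₁ f₂, Fin.addCases q₁ q₂,
    Fin.addCases (by simpa using hf₁) (by simpa using hf₂), by simp [Fin.sum_univ_add]⟩

lemma mul_mem_rightIdealSpan {x : A} (hx : x ∈ S) (q : A) : x * q ∈ rightIdealSpan S :=
  ⟨1, fun _ => x, fun _ => q, fun _ => hx, by simp⟩

lemma rightIdealSpan_subset_idealSpan (h : ∀ x ∈ R, ∃ p, ∃ g ∈ S, x = p * g) :
    rightIdealSpan R ⊆ idealSpan S := by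
  rintro x ⟨d, f, q, hf, rfl⟩
  choose p g hg hfg using fun i => h (f i) (hf i)
  exact ⟨d, p, g, q, hg, Finset.sum_congr rfl fun i _ => by rw [hfg]⟩

end Spans

namespace FreeMonoid

variable {α β : Type*}

lemma mul_eq_mul_iff {a b c d : FreeMonoid α} :
    a * b = c * d ↔ (∃ t, c = a * t ∧ b = t * d) ∨ ∃ t, a = c * t ∧ d = t * b :=
  List.append_eq_append_iff

def IsReducible (ℓ : β → FreeMonoid α) (G : Set β) (w : FreeMonoid α) : Prop :=
  ∃ g ∈ G, ∃ a b : FreeMonoid α, w = a * ℓ g * b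

def HasIrreducibleProperPrefixes (ℓ : β → FreeMonoid α) (G : Set β) (w : FreeMonoid α) :
    Prop :=
  ∀ p q : FreeMonoid α, q ≠ 1 → w = p * q → ¬IsReducible ℓ G p

/-- Take the occurrence of a factor `ℓ g` in `w` that ends first. -/
lemma IsReducible.exists_hasIrreducibleProperPrefixes {ℓ : β → FreeMonoid α} {G : Set β}
    {w : FreeMonoid α} (hw : IsReducible ℓ G w) :
    ∃ g ∈ G, ∃ a b : FreeMonoid α,
      w = a * ℓ g * b ∧ HasIrreducibleProperPrefixes ℓ G (a * ℓ g) := by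
  classical
  let EndsAt (l : ℕ) : Prop := ∃ g ∈ G, ∃ a b, w = a * ℓ g * b ∧ (a * ℓ g).length = l
  have hex : ∃ l, EndsAt l := by
    obtain ⟨g, hg, a, b, hab⟩ := hw
    exact ⟨_, g, hg, a, b, hab, rfl⟩
  obtain ⟨g, hg, a, b, hab, hlen⟩ := Nat.find_spec hex
  refine ⟨g, hg, a, b, hab, fun p q hq hpq ⟨g', hg', a', b', hp⟩ => ?_⟩
  refine Nat.find_min hex (m := (a' * ℓ g').length) ?_
    ⟨g', hg', a', b' * q * b, by rw [hab, hpq, hp]; simp only [mul_assoc], rfl⟩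
  have : q.length ≠ 0 := by simpa using hq
  rw [← hlen, hpq, hp]
  simp only [length_mul]
  omega

end FreeMonoid

section LeadingMonomial

variable {K : Type*} [Field K] {n : ℕ} (ord : LinearOrder (FreeMonoid (Fin n)))
  {f g h : MonoidAlgebra K (FreeMonoid (Fin n))}

lemma lm_mem_support (hf : f ≠ 0) : lm ord f ∈ f.coeff.support := by
  rw [lm, dif_pos (Finsupp.support_nonempty_iff.mpr (mt coeff_eq_zero.mp hf))]
  exact Finset.max'_mem _ _

lemma le_lm {m : FreeMonoid (Fin n)} (hm : m ∈ f.coeff.support) : ord.le m (lm ord f) := by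
  rw [lm, dif_pos ⟨m, hm⟩]
  exact Finset.le_max' _ _ hm

lemma ne_zero_of_coeff_lm_eq_one (hf : f.coeff (lm ord f) = 1) : f ≠ 0 := by
  rintro rfl
  simp at hf

lemma coeff_of_mul_mul (m s : FreeMonoid (Fin n)) :
    (of K _ m * g).coeff (m * s) = g.coeff s := by
  rw [of_apply, coeff_single_mul_mul, one_mul]

variable {ord}

lemma lm_of_mul
    (hcomp : ∀ a b m m' : FreeMonoid (Fin n), ord.le m m' → ord.le (a * m * b) (a * m' * b))
    (hg : g ≠ 0) (m : FreeMonoid (Fin n)) :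
    lm ord (of K _ m * g) = m * lm ord g := by
  let := ord
  have hsupp : (of K _ m * g).coeff.support = g.coeff.support.map (mulLeftEmbedding m) := by
    rw [of_apply]
    exact support_coeff_single_mul g 1 (by simp) m
  have hmem : m * lm ord g ∈ (of K _ m * g).coeff.support :=
    hsupp ▸ Finset.mem_map_of_mem _ (lm_mem_support ord hg)
  refine le_antisymm ?_ (le_lm ord hmem)
  have hmg : of K _ m * g ≠ 0 := fun h0 => by simp only [h0, coeff_zero] at hmem; simp at hmem
  obtain ⟨s, hs, hs_eq⟩ := Finset.mem_map.mp (hsupp ▸ lm_mem_support ord hmg)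
  rw [← hs_eq]
  simpa using hcomp m 1 s (lm ord g) (le_lm ord hs)

lemma lt_lm_of_mem_support_sub_mul_single
    (hcomp : ∀ a b m m' : FreeMonoid (Fin n), ord.le m m' → ord.le (a * m * b) (a * m' * b))
    (hh : h.coeff (lm ord h) = 1)
    {b : FreeMonoid (Fin n)} (hb : lm ord f = lm ord h * b) {s : FreeMonoid (Fin n)}
    (hs : s ∈ (f - h * single b (f.coeff (lm ord f))).coeff.support) : ord.lt s (lm ord f) := by
  classical
  let := ord
  set y := h * single b (f.coeff (lm ord f))
  have hy_lm : y.coeff (lm ord f) = f.coeff (lm ord f) := by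
    conv_lhs => rw [hb]
    rw [coeff_mul_single_mul, hh, one_mul]
  have hy_le : ∀ t ∈ y.coeff.support, t ≤ lm ord f := by
    intro t ht
    obtain ⟨u, hu, rfl⟩ := Finset.mem_image.mp (support_coeff_mul_single_subset h _ b ht)
    simpa [hb] using hcomp 1 b u (lm ord h) (le_lm ord hu)
  refine lt_of_le_of_ne ?_ ?_
  · rcases Finset.mem_union.mp (Finsupp.support_sub (coeff_sub f y ▸ hs)) with hs | hs
    exacts [le_lm ord hs, hy_le s hs]
  · rintro rfl
    simp [coeff_sub, hy_lm] at hs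

theorem idealSpan_subset_rightIdealSpan (hwo : WellFounded ord.lt)
    (hcomp : ∀ a b m m' : FreeMonoid (Fin n), ord.le m m' → ord.le (a * m * b) (a * m' * b))
    {S R : Set (MonoidAlgebra K (FreeMonoid (Fin n)))} (hR : R ⊆ idealSpan S)
    (hmonic : ∀ h ∈ R, h.coeff (lm ord h) = 1)
    (hdiv : ∀ f ∈ idealSpan S, f ≠ 0 → ∃ h ∈ R, ∃ b, lm ord f = lm ord h * b) :
    idealSpan S ⊆ rightIdealSpan R := by
  suffices ∀ w, ∀ f ∈ idealSpan S, lm ord f = w → f ∈ rightIdealSpan R from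
    fun f hf => this _ f hf rfl
  intro w
  induction w using hwo.induction with
  | _ w ih =>
  intro f hf hfw
  by_cases hf0 : f = 0
  · exact hf0 ▸ zero_mem_rightIdealSpan
  obtain ⟨h, hhR, b, hb⟩ := hdiv f hf hf0
  set y := h * single b (f.coeff (lm ord f))
  have hrem : f - y ∈ rightIdealSpan R := by
    by_cases hrem0 : f - y = 0
    · exact hrem0 ▸ zero_mem_rightIdealSpan
    refine ih _ ?_ _ (sub_mem_idealSpan hf (mul_mem_idealSpan (hR hhR) _)) rfl
    exact hfw ▸ lt_lm_of_mem_support_sub_mul_single hcomp (hmonic h hhR) hb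
      (lm_mem_support ord hrem0)
  rw [← sub_add_cancel f y]
  exact add_mem_rightIdealSpan hrem (mul_mem_rightIdealSpan hhR _)

end LeadingMonomial

section Rho

open FreeMonoid

variable {K : Type*} [Field K] {n : ℕ} {ord : LinearOrder (FreeMonoid (Fin n))}
  {G : Set (MonoidAlgebra K (FreeMonoid (Fin n)))}

variable (ord G) in
/-- Green's right Gröbner basis `ρ(I)` built from the Gröbner basis `G` of `I`. -/
def rho : Set (MonoidAlgebra K (FreeMonoid (Fin n))) :=
  {h | ∃ m : FreeMonoid (Fin n), ∃ g ∈ G,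
    h = of K _ m * g ∧ HasIrreducibleProperPrefixes (lm ord) G (m * lm ord g)}

lemma rightIdealSpan_rho_subset : rightIdealSpan (rho ord G) ⊆ idealSpan G :=
  rightIdealSpan_subset_idealSpan fun _ ⟨_, g, hg, he, _⟩ => ⟨_, g, hg, he⟩

lemma rho_subset_idealSpan : rho ord G ⊆ idealSpan G :=
  fun x hx => rightIdealSpan_rho_subset (by simpa using mul_mem_rightIdealSpan hx 1)

lemma coeff_lm_of_mem_rho
    (hcomp : ∀ a b m m' : FreeMonoid (Fin n), ord.le m m' → ord.le (a * m * b) (a * m' * b))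
    (hmonic : ∀ g ∈ G, g.coeff (lm ord g) = 1) {h : MonoidAlgebra K (FreeMonoid (Fin n))}
    (hh : h ∈ rho ord G) : h.coeff (lm ord h) = 1 := by
  obtain ⟨m, g, hg, rfl, -⟩ := hh
  rw [lm_of_mul hcomp (ne_zero_of_coeff_lm_eq_one ord (hmonic g hg)), coeff_of_mul_mul,
    hmonic g hg]

lemma exists_mem_rho_lm_eq_mul
    (hcomp : ∀ a b m m' : FreeMonoid (Fin n), ord.le m m' → ord.le (a * m * b) (a * m' * b))
    (hmonic : ∀ g ∈ G, g.coeff (lm ord g) = 1)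
    {f : MonoidAlgebra K (FreeMonoid (Fin n))} (hf : IsReducible (lm ord) G (lm ord f)) :
    ∃ h ∈ rho ord G, ∃ b, lm ord f = lm ord h * b := by
  obtain ⟨g, hg, a, b, hab, hirr⟩ := hf.exists_hasIrreducibleProperPrefixes
  refine ⟨of K _ a * g, ⟨a, g, hg, rfl, hirr⟩, b, ?_⟩
  rw [lm_of_mul hcomp (ne_zero_of_coeff_lm_eq_one ord (hmonic g hg)), hab]

lemma eq_of_lm_eq_mul_lm (hmonic : ∀ g ∈ G, g.coeff (lm ord g) = 1)
    (hred : ∀ g ∈ G, ∀ m ∈ g.coeff.support,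
      ¬∃ g' ∈ G, g' ≠ g ∧ ∃ a b : FreeMonoid (Fin n), m = a * lm ord g' * b)
    {g g' : MonoidAlgebra K (FreeMonoid (Fin n))} (hg : g ∈ G) (hg' : g' ∈ G)
    {t : FreeMonoid (Fin n)} (ht : lm ord g = t * lm ord g') : g = g' ∧ t = 1 := by
  have hgg' : g = g' := by
    by_contra hne
    exact hred g hg _ (lm_mem_support ord (ne_zero_of_coeff_lm_eq_one ord (hmonic g hg)))
      ⟨g', hg', Ne.symm hne, t, 1, by rw [mul_one, ht]⟩
  subst hgg'
  exact ⟨rfl, mul_eq_right.mp ht.symm⟩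

lemma eq_of_mul_lm_eq_mul_lm (hmonic : ∀ g ∈ G, g.coeff (lm ord g) = 1)
    (hred : ∀ g ∈ G, ∀ m ∈ g.coeff.support,
      ¬∃ g' ∈ G, g' ≠ g ∧ ∃ a b : FreeMonoid (Fin n), m = a * lm ord g' * b)
    {g g' : MonoidAlgebra K (FreeMonoid (Fin n))} (hg : g ∈ G) (hg' : g' ∈ G)
    {m m' : FreeMonoid (Fin n)} (h : m * lm ord g = m' * lm ord g') : m = m' ∧ g = g' := by
  rcases mul_eq_mul_iff.mp h with ⟨t, rfl, ht⟩ | ⟨t, rfl, ht⟩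
  · obtain ⟨rfl, rfl⟩ := eq_of_lm_eq_mul_lm hmonic hred hg hg' ht
    simp
  · obtain ⟨rfl, rfl⟩ := eq_of_lm_eq_mul_lm hmonic hred hg' hg ht
    simp

lemma lm_ne_lm_mul_of_mem_rho
    (hcomp : ∀ a b m m' : FreeMonoid (Fin n), ord.le m m' → ord.le (a * m * b) (a * m' * b))
    (hmonic : ∀ g ∈ G, g.coeff (lm ord g) = 1)
    (hred : ∀ g ∈ G, ∀ m ∈ g.coeff.support,
      ¬∃ g' ∈ G, g' ≠ g ∧ ∃ a b : FreeMonoid (Fin n), m = a * lm ord g' * b)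
    {f f' : MonoidAlgebra K (FreeMonoid (Fin n))} (hf : f ∈ rho ord G) (hf' : f' ∈ rho ord G)
    (hne : f' ≠ f) (b : FreeMonoid (Fin n)) : lm ord f ≠ lm ord f' * b := by
  obtain ⟨m, g, hg, rfl, hirr⟩ := hf
  obtain ⟨m', g', hg', rfl, -⟩ := hf'
  have hg0 := fun g (hg : g ∈ G) => ne_zero_of_coeff_lm_eq_one ord (hmonic g hg)
  rw [lm_of_mul hcomp (hg0 g hg), lm_of_mul hcomp (hg0 g' hg')]
  intro hlm
  by_cases hb : b = 1
  · rw [hb, mul_one] at hlm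
    obtain ⟨rfl, rfl⟩ := eq_of_mul_lm_eq_mul_lm hmonic hred hg hg' hlm
    exact hne rfl
  · exact hirr _ b hb hlm ⟨g', hg', m', 1, (mul_one _).symm⟩

end Rho

/-- **`ρ(I)` is a right Gröbner basis of `I`** (specialization of Green's result to the
free algebra).  Let `⪯` be a monomial ordering on `⟨X⟩`, let `I` be the two-sided ideal
generated by its reduced Gröbner basis `G`, and let
`ρ(I) = { m·g : m ∈ ⟨X⟩, g ∈ G`, every proper prefix of `m·lm(g)` is irreducible modulo
`lm(G) }`.  Then `ρ(I)` right-generates `I`, the leading monomial of every nonzero `f ∈ I`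
is a right multiple of `lm(h)` for some `h ∈ ρ(I)`, and for every `f ∈ ρ(I)` the leading
monomial `lm(f)` is not a right multiple of `lm(f')` for any `f' ∈ ρ(I) \ {f}`. -/
theorem rho_is_rightGroebnerBasis (K : Type*) [Field K] (n : ℕ)
    (ord : LinearOrder (FreeMonoid (Fin n)))
    (hwo : WellFounded ord.lt)
    (hcomp : ∀ a b m m' : FreeMonoid (Fin n), ord.le m m' → ord.le (a * m * b) (a * m' * b))
    (G : Set (MonoidAlgebra K (FreeMonoid (Fin n))))
    -- `G` is a Gröbner basis of the ideal `I = (G)` it generates: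
    (hGB : ∀ f ∈ idealSpan G, f ≠ 0 →
      ∃ g ∈ G, ∃ a b : FreeMonoid (Fin n), lm ord f = a * lm ord g * b)
    -- `G` is reduced: every element is monic and no monomial in the support of `g ∈ G`
    -- is a multiple of `lm(g')` for some `g' ∈ G \ {g}`:
    (hmonic : ∀ g ∈ G, g.coeff (lm ord g) = 1)
    (hred : ∀ g ∈ G, ∀ m ∈ g.coeff.support,
      ¬∃ g' ∈ G, g' ≠ g ∧ ∃ a b : FreeMonoid (Fin n), m = a * lm ord g' * b)
    (ρ : Set (MonoidAlgebra K (FreeMonoid (Fin n))))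
    (hρ : ρ = {h | ∃ m : FreeMonoid (Fin n), ∃ g ∈ G,
      h = MonoidAlgebra.of K (FreeMonoid (Fin n)) m * g ∧
      ∀ p q : FreeMonoid (Fin n), q ≠ 1 → m * lm ord g = p * q →
        ¬∃ g' ∈ G, ∃ a b : FreeMonoid (Fin n), p = a * lm ord g' * b}) :
    rightIdealSpan ρ = idealSpan G ∧
      (∀ f ∈ idealSpan G, f ≠ 0 →
        ∃ h ∈ ρ, ∃ b : FreeMonoid (Fin n), lm ord f = lm ord h * b) ∧
      (∀ f ∈ ρ, ¬∃ f' ∈ ρ, f' ≠ f ∧ ∃ b : FreeMonoid (Fin n), lm ord f = lm ord f' * b) := by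
  subst hρ
  have hdiv : ∀ f ∈ idealSpan G, f ≠ 0 → ∃ h ∈ rho ord G, ∃ b, lm ord f = lm ord h * b :=
    fun f hf hf0 => exists_mem_rho_lm_eq_mul hcomp hmonic (hGB f hf hf0)
  refine ⟨subset_antisymm rightIdealSpan_rho_subset ?_, hdiv, ?_⟩
  · exact idealSpan_subset_rightIdealSpan hwo hcomp rho_subset_idealSpan
      (fun _ => coeff_lm_of_mem_rho hcomp hmonic) hdiv
  · rintro f hf ⟨f', hf', hne, b, hb⟩
    exact lm_ne_lm_mul_of_mem_rho hcomp hmonic hred hf hf' hne b hb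
end
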